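/- arXiv:0904.2375 — 6 statements merged into one kernel-verified Lean document; each statement's English description precedes it below -/
import Mathlib

section
/- Let X = X(F⁰, ℓ, T) be a PFT in standard form over a finite alphabet Σ, let n ≥ 1 be an integer, let d = gcd(n, T), and let X_d = X(F⁰, ℓ, d) be the PFT with the same forbidden set F⁰ and period d. Then |P_n(X)| = |P_n(X_d)| = Σ_{z ∈ Ω_d} (−1)^{dW_z/L_z − 1} · tr(A_z^n), where the matrices A_z are built from F⁰ for binary words z of length d, and dW_z/L_z equals the number of 1's in z. -/
open scoped BigOperators

/-- Words of length `ℓ` over the alphabet `A`. -/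
abbrev Word (A : Type) (ℓ : ℕ) := Fin ℓ → A

/-- The periodic-finite-type shift in standard form `X(F⁰, ℓ, T)`:
bi-infinite sequences `x` such that for some shift `r < T`, for every index `i ≡ 0 (mod T)`,
the length-`ℓ` word of `σ^r x` starting at `i` avoids `F0`. -/
def pftSF {A : Type} {ℓ : ℕ} (F0 : Set (Word A ℓ)) (T : ℕ) : Set (ℤ → A) :=
  {x | ∃ r : ℕ, r < T ∧
    ∀ i : ℤ, (T : ℤ) ∣ i → (fun k : Fin ℓ => x (i + (r : ℤ) + ((k : ℕ) : ℤ))) ∉ F0}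

/-- `P_n(X)`: the points of `X = X(F⁰, ℓ, T)` that are periodic with period `n`. -/
def pftPer {A : Type} {ℓ : ℕ} (F0 : Set (Word A ℓ)) (T n : ℕ) : Set (ℤ → A) :=
  {x | x ∈ pftSF F0 T ∧ ∀ i : ℤ, x (i + (n : ℤ)) = x i}

/-- The exponential of a formal power series (the standard formula, which agrees with
`exp` whenever the constant term of `S` is `0`). -/
noncomputable def psExp (S : PowerSeries ℚ) : PowerSeries ℚ :=
  PowerSeries.mk fun n =>
    ∑ k ∈ Finset.range (n + 1), PowerSeries.coeff n (S ^ k) / (Nat.factorial k : ℚ)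

/-- The zeta function `ζ_X(t) = exp (Σ_{n ≥ 1} |P_n(X)| tⁿ / n)` of the PFT `X(F⁰, ℓ, T)`. -/
noncomputable def pftZeta {A : Type} {ℓ : ℕ} (F0 : Set (Word A ℓ)) (T : ℕ) : PowerSeries ℚ :=
  psExp (PowerSeries.mk fun n =>
    if n = 0 then 0 else (Nat.card (pftPer F0 T n) : ℚ) / (n : ℚ))

/-- A word-based graph (WBG) with `T` phases, each phase a set of words of length `ℓ`. -/
structure WBG (A : Type) (ℓ T : ℕ) where
  V : Fin T → Set (Word A ℓ)

/-- Vertices of a WBG: pairs `(i, w)` with `w ∈ V^(i)`. -/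
abbrev WBG.Vertex {A : Type} {ℓ T : ℕ} (G : WBG A ℓ T) : Type :=
  {p : Fin T × Word A ℓ // p.2 ∈ G.V p.1}

/-- The labeled edge relation of a WBG: there is an edge labeled `a` from `u^(i)` to
`v^((i+1) mod T)` iff `u₂⋯u_ℓ = v₁⋯v_{ℓ-1}` and `v_ℓ = a`. -/
def WBG.Edge {A : Type} {ℓ T : ℕ} (G : WBG A ℓ T) (u v : G.Vertex) (a : A) : Prop :=
  ((v.1.1 : ℕ) = ((u.1.1 : ℕ) + 1) % T) ∧
  (∀ (k : ℕ) (h : k + 1 < ℓ), u.1.2 ⟨k + 1, h⟩ = v.1.2 ⟨k, by omega⟩) ∧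
  (∀ h : ℓ - 1 < ℓ, v.1.2 ⟨ℓ - 1, h⟩ = a)

/-- A path of length `n` (i.e. with `n` edges) in a WBG, together with its label sequence. -/
structure WBG.Path {A : Type} {ℓ T : ℕ} (G : WBG A ℓ T) (n : ℕ) where
  vtx : Fin (n + 1) → G.Vertex
  lbl : Fin n → A
  adj : ∀ k : Fin n, G.Edge (vtx k.castSucc) (vtx k.succ) (lbl k)

/-- The `n`-periodic bi-infinite repetition `(f 0 ⋯ f (n-1))^∞`. -/
def periodize {A : Type} {n : ℕ} (hn : 0 < n) (f : Fin n → A) : ℤ → A :=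
  fun j => f ⟨(j % (n : ℤ)).toNat, by
    have h1 : 0 ≤ j % (n : ℤ) := Int.emod_nonneg j (by exact_mod_cast hn.ne')
    have h2 : j % (n : ℤ) < (n : ℤ) := Int.emod_lt_of_pos j (by exact_mod_cast hn)
    omega⟩

/-- `C_n(w^(i))_G`: the set of `n`-periodic bi-infinite sequences generated by cycles
of length `n` at the vertex `w^(i)` of `G` (empty if `w ∉ V^(i)` or `n = 0`). -/
def WBG.CnSet {A : Type} {ℓ T : ℕ} (G : WBG A ℓ T) (i : Fin T) (w : Word A ℓ) (n : ℕ) :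
    Set (ℤ → A) :=
  {x | ∃ (p : G.Path n) (hn : 0 < n),
    (p.vtx 0).1 = (i, w) ∧ (p.vtx (Fin.last n)).1 = (i, w) ∧ x = periodize hn p.lbl}

noncomputable instance WBG.instFintypeVertex {A : Type} {ℓ T : ℕ} [Fintype A] (G : WBG A ℓ T) :
    Fintype G.Vertex := Fintype.ofFinite _

noncomputable instance WBG.instDecidableEqVertex {A : Type} {ℓ T : ℕ} (G : WBG A ℓ T) :
    DecidableEq G.Vertex := Classical.decEq _

open Classical in
/-- The (0–1) adjacency matrix of a WBG, with rational entries. -/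
noncomputable def WBG.adjMatrix {A : Type} {ℓ T : ℕ} [Fintype A] (G : WBG A ℓ T) :
    Matrix G.Vertex G.Vertex ℚ :=
  Matrix.of fun u v => if ∃ a : A, G.Edge u v a then 1 else 0

/-- The diagonal block of `(adjacency matrix)^T` indexed by the vertices in phase `i`. -/
noncomputable def WBG.phaseBlock {A : Type} {ℓ T : ℕ} [Fintype A] (G : WBG A ℓ T) (i : ℕ) :
    Matrix {v : G.Vertex // (v.1.1 : ℕ) = i} {v : G.Vertex // (v.1.1 : ℕ) = i} ℚ :=
  Matrix.of fun u v => (G.adjMatrix ^ T) u.1 v.1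

/-- The letter `z_m` of a binary word `z ∈ {0,1}^T`, read cyclically (indices mod `T`). -/
def zAt {T : ℕ} (z : Fin T → Bool) (m : ℕ) : Bool :=
  if h : m % T < T then z ⟨m % T, h⟩ else false

/-- `L_z`: the length of the primitive root `z^♯` of `z`, i.e. the least positive `L`
dividing `T` such that `z = (z^♯)^{T/L}` for the length-`L` prefix `z^♯` of `z`. -/
noncomputable def primLen {T : ℕ} (z : Fin T → Bool) : ℕ :=
  sInf {L : ℕ | 0 < L ∧ L ∣ T ∧ ∀ m : ℕ, zAt z (m + L) = zAt z m}

/-- `W_z`: the number of `1`s in the primitive root `z^♯` of `z`. -/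
noncomputable def primOnes {T : ℕ} (z : Fin T → Bool) : ℕ :=
  ((Finset.range (primLen z)).filter fun m => zAt z m = true).card

/-- `N_z = T / L_z`, so that `z = (z^♯)^{N_z}`. -/
noncomputable def primCopies {T : ℕ} (z : Fin T → Bool) : ℕ := T / primLen z

/-- The WBG `G_z` with `L_z` phases: phase `i` is `Σ^ℓ ∖ F⁰` if `z_i = 1`, else `Σ^ℓ`. -/
noncomputable def zGraph {A : Type} {ℓ : ℕ} (F0 : Set (Word A ℓ)) {T : ℕ} (z : Fin T → Bool) :
    WBG A ℓ (primLen z) :=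
  ⟨fun i => if zAt z (i : ℕ) then {w | w ∉ F0} else Set.univ⟩

/-- The MS presentation of the PFT `X(F⁰, ℓ, T)`: the WBG with `T` phases where
`V^(0) = Σ^ℓ ∖ F⁰` and `V^(i) = Σ^ℓ` for `i ≠ 0`. -/
def msGraph {A : Type} {ℓ : ℕ} (F0 : Set (Word A ℓ)) (T : ℕ) : WBG A ℓ T :=
  ⟨fun i => if (i : ℕ) = 0 then {w | w ∉ F0} else Set.univ⟩

/-- `Ω` is a set of conjugacy-class representatives of `{0,1}^T ∖ {0^T}` (under cyclic
shifts), each representative beginning with the symbol `1`. -/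
def IsRepSet {T : ℕ} (Ω : Finset (Fin T → Bool)) : Prop :=
  (∀ z ∈ Ω, zAt z 0 = true) ∧
  ∀ y : Fin T → Bool, (∃ i, y i = true) →
    ∃! z : Fin T → Bool, z ∈ Ω ∧ ∃ q : ℕ, ∀ m : ℕ, zAt z m = zAt y (m + q)

/-- `J(z,q) = {(q - i) mod T : 0 ≤ i ≤ T-1, z_i = 1}`, as a subset of `Fin T`. -/
def Jset {T : ℕ} (z : Fin T → Bool) (q : ℕ) : Set (Fin T) :=
  {j | ∃ i : Fin T, z i = true ∧ (j : ℕ) = (q + T - (i : ℕ)) % T}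

/-- A general PFT `X_{F̂,T}` given an ordered list `F̂^(0), …, F̂^(T-1)` of sets of
forbidden words (`Fh j` is read for `j ∈ {0, …, T-1}` via `j = i mod T`). -/
def pftGen {A : Type} (T : ℕ) (Fh : ℕ → Set (List A)) : Set (ℤ → A) :=
  {x | ∃ r : ℕ, r < T ∧ ∀ i : ℤ, ∀ f ∈ Fh ((i % (T : ℤ)).toNat),
    ¬ ∀ (k : ℕ) (hk : k < f.length), f.get ⟨k, hk⟩ = x (i + (r : ℤ) + (k : ℤ))}

/-!
An `n`-periodic point is the periodic extension of a word `f` of length `n`, and by Bézout it lies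
in `X(F⁰, ℓ, T)` iff its windows avoid `F⁰` along one residue class modulo `d = gcd(n, T)`.
Inclusion–exclusion over the nonempty sets of residue classes, encoded as nonzero binary words `y`
of length `d`, turns `|P_n(X)|` into an alternating sum of the numbers of `f` whose windows avoid
`F⁰` at every position `j` with `y_j = 1`. Grouping the words `y` into rotation classes, the `L_z`
rotations of a representative `z` match the `L_z` initial phases of a closed walk of length `n` in
`G_z`, whose vertices are the windows of the periodic extension of `f`; and `tr(A_z^n)` counts
these closed walks.
-/

open Finset Function

theorem card_exists_eq_sum_neg_one_pow {α ι R : Type*} [Fintype α] [Fintype ι] [DecidableEq ι]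
    [CommRing R] (S : ι → α → Prop) :
    (Nat.card {a // ∃ i, S i a} : R) =
      ∑ y ∈ univ.filter (fun y : ι → Bool => ∃ i, y i),
        (-1 : R) ^ (#{i | y i} - 1) * (Nat.card {a // ∀ i, y i → S i a} : R) := by
  classical
  have hcard (P : α → Prop) [DecidablePred P] :
      (Nat.card {a // P a} : R) = ∑ a, if P a then 1 else 0 := by
    simp [Nat.card_eq_fintype_card, Fintype.card_subtype]
  simp_rw [hcard, mul_sum]
  rw [sum_comm]
  refine sum_congr rfl fun a _ => ?_
  set c : ι → R := fun i => if S i a then 1 else 0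
  have hterm (y : ι → Bool) : ∏ i, (if y i then -c i else 1) =
      (-1) ^ #{i | y i} * if ∀ i, y i → S i a then 1 else 0 := by
    rw [prod_ite, prod_const_one, mul_one, prod_neg, prod_boole]
    simp
  have hexpand : ∏ i, (1 - c i) = ∑ y : ι → Bool, ∏ i, (if y i then -c i else 1) := by
    rw [← Fintype.prod_sum fun i (b : Bool) => if b then -c i else 1]
    exact prod_congr rfl fun i _ => by simp [sub_eq_neg_add]
  have hzero : univ.filter (fun y : ι → Bool => ¬∃ i, y i) = {fun _ => false} := by
    ext y
    simp [funext_iff]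
  have hunion : (if ∃ i, S i a then 1 else 0 : R) = 1 - ∏ i, (1 - c i) := by
    by_cases h : ∃ i, S i a
    · obtain ⟨i, hi⟩ := h
      rw [if_pos ⟨i, hi⟩, prod_eq_zero (mem_univ i) (by simp [c, hi]), sub_zero]
    · push Not at h
      simp [c, h]
  have hfalse : ∏ i, (if (fun _ => false : ι → Bool) i then -c i else 1) = 1 := by simp
  rw [hunion, hexpand, ← sum_filter_add_sum_filter_not univ (fun y : ι → Bool => ∃ i, y i),
    hzero, sum_singleton, hfalse, sub_add_cancel_right, ← sum_neg_distrib]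
  refine sum_congr rfl fun y hy => ?_
  obtain ⟨i, hi⟩ := (mem_filter.mp hy).2
  have hpos : 0 < #{i | y i} := card_pos.mpr ⟨i, by simp [hi]⟩
  rw [hterm, ← neg_mul, ← Nat.sub_add_cancel hpos, pow_succ, Nat.add_sub_cancel]
  ring

theorem Function.Periodic.sum_range_mul {M : Type*} [AddCommMonoid M] {f : ℕ → M} {L : ℕ}
    (hf : Periodic f L) (N : ℕ) : ∑ m ∈ range (N * L), f m = N • ∑ m ∈ range L, f m := by
  induction N with
  | zero => simp
  | succ N ih =>
    rw [add_mul, one_mul, sum_range_add, ih, succ_nsmul]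
    congr 1
    exact sum_congr rfl fun m _ => by rw [add_comm]; exact hf.nat_mul N m

theorem Function.Periodic.sum_range_comp_add_one {M : Type*} [AddCancelCommMonoid M]
    {f : ℕ → M} {L : ℕ} (hf : Periodic f L) :
    ∑ m ∈ range L, f (m + 1) = ∑ m ∈ range L, f m := by
  have h := sum_range_succ' f L
  rw [sum_range_succ, hf.eq] at h
  exact (add_right_cancel h).symm

section walks

variable {V : Type*} (R : V → V → Prop)

abbrev RelWalk (m : ℕ) (u v : V) : Type _ :=
  {g : Fin (m + 1) → V // g 0 = u ∧ g (Fin.last m) = v ∧ ∀ k : Fin m, R (g k.castSucc) (g k.succ)}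

theorem card_relWalk_succ [Fintype V] (m : ℕ) (u v : V) [DecidablePred (R u)] :
    Nat.card (RelWalk R (m + 1) u v) =
      ∑ w, if R u w then Nat.card (RelWalk R m w v) else 0 := by
  rw [← Nat.card_congr (Equiv.sigmaFiberEquiv fun g : RelWalk R (m + 1) u v => g.1 1),
    Nat.card_sigma]
  refine sum_congr rfl fun w _ => ?_
  split_ifs with h
  · refine Nat.card_congr
      { toFun := fun g => ⟨Fin.tail g.1.1, ?_, ?_, ?_⟩
        invFun := fun g => ⟨⟨Fin.cons u g.1, rfl, ?_, ?_⟩, ?_⟩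
        left_inv := fun g => ?_
        right_inv := fun g => ?_ }
    · simpa [Fin.tail] using g.2
    · simpa [Fin.tail] using g.1.2.2.1
    · exact fun k => g.1.2.2.2 k.succ
    · simpa [← Fin.succ_last] using g.2.2.1
    · exact Fin.forall_fin_succ.mpr ⟨by simpa [g.2.1] using h, by simpa using g.2.2.2⟩
    · simpa using g.2.1
    · exact Subtype.ext (Subtype.ext (by simpa [g.1.2.1] using Fin.cons_self_tail g.1.1))
    · exact Subtype.ext rfl
  · have : IsEmpty {g : RelWalk R (m + 1) u v // g.1 1 = w} :=
      ⟨fun g => h (by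
        have h0 := g.1.2.2.2 0
        rwa [Fin.castSucc_zero, Fin.succ_zero_eq_one, g.1.2.1, g.2] at h0)⟩
    exact Nat.card_of_isEmpty

theorem Matrix.of_ite_pow_apply [Fintype V] [DecidableEq V] [DecidableRel R] {α : Type*}
    [Semiring α] (m : ℕ) (u v : V) :
    ((Matrix.of fun a b => if R a b then (1 : α) else 0) ^ m) u v =
      Nat.card (RelWalk R m u v) := by
  induction m generalizing u with
  | zero =>
    rw [pow_zero, Matrix.one_apply]
    split_ifs with h
    · subst h
      rw [Nat.card_eq_one_iff_exists.mpr ⟨⟨fun _ => u, rfl, rfl, Fin.elim0⟩,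
        fun g => Subtype.ext (funext fun k => by rw [Fin.fin_one_eq_zero k]; exact g.2.1)⟩,
        Nat.cast_one]
    · have : IsEmpty (RelWalk R 0 u v) := ⟨fun g => h (g.2.1.symm.trans g.2.2.1)⟩
      simp
  | succ m ih =>
    rw [pow_succ', Matrix.mul_apply, card_relWalk_succ, Nat.cast_sum]
    refine sum_congr rfl fun w _ => ?_
    rw [ih, Matrix.of_apply]
    split_ifs <;> simp

/-- A closed walk of length `n` along `R`, unrolled into an `n`-periodic sequence. -/
abbrev RelCycle (n : ℕ) : Type _ := {g : ℕ → V // Periodic g n ∧ ∀ m, R (g m) (g (m + 1))}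

theorem rel_apply_mod_apply_add_one_mod {n : ℕ} (hn : 0 < n) {g : Fin (n + 1) → V}
    (hclosed : g (Fin.last n) = g 0) (hg : ∀ k : Fin n, R (g k.castSucc) (g k.succ)) (m : ℕ) :
    R (g (Fin.castSucc ⟨m % n, Nat.mod_lt m hn⟩))
      (g (Fin.castSucc ⟨(m + 1) % n, Nat.mod_lt _ hn⟩)) := by
  have hk := Nat.mod_lt m hn
  have hsucc : (m + 1) % n = (m % n + 1) % n := (Nat.mod_add_mod m n 1).symm
  convert hg ⟨m % n, hk⟩ using 1
  obtain h | h : m % n + 1 < n ∨ m % n + 1 = n := by omega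
  · exact congrArg g (Fin.ext (by simp only [Fin.val_castSucc, Fin.val_succ, hsucc,
      Nat.mod_eq_of_lt h]))
  · calc _ = g 0 := congrArg g (Fin.ext (by simp only [Fin.val_castSucc, hsucc, h]; simp))
      _ = g (Fin.last n) := hclosed.symm
      _ = _ := congrArg g (Fin.ext (by simp [h]))

def relCycleFiberEquiv {n : ℕ} (hn : 0 < n) (u : V) :
    {g : RelCycle R n // g.1 0 = u} ≃ RelWalk R n u u where
  toFun g := ⟨fun k => g.1.1 k, g.2, by simpa [g.2] using g.1.2.1.eq, fun k => g.1.2.2 k⟩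
  invFun g := ⟨⟨fun m => g.1 (Fin.castSucc ⟨m % n, Nat.mod_lt m hn⟩), fun m => by simp,
    rel_apply_mod_apply_add_one_mod R hn (g.2.2.1.trans g.2.1.symm) g.2.2.2⟩, by simpa using g.2.1⟩
  left_inv g := Subtype.ext (Subtype.ext (funext fun m => g.1.2.1.map_mod_nat m))
  right_inv g := Subtype.ext <| funext fun k => by
    obtain h | h := Nat.lt_succ_iff_lt_or_eq.mp k.2
    · exact congrArg g.1 (Fin.ext (by simp [Nat.mod_eq_of_lt h]))
    · calc _ = g.1 0 := congrArg g.1 (Fin.ext (by simp [h]))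
        _ = g.1 (Fin.last n) := g.2.1.trans g.2.2.1.symm
        _ = _ := congrArg g.1 (Fin.ext h.symm)

theorem Matrix.trace_of_ite_pow [Fintype V] [DecidableEq V] [DecidableRel R] {α : Type*}
    [Semiring α] {n : ℕ} (hn : 0 < n) :
    Matrix.trace ((Matrix.of fun a b => if R a b then (1 : α) else 0) ^ n) =
      Nat.card (RelCycle R n) := by
  have (u : V) : Finite {g : RelCycle R n // g.1 0 = u} :=
    Finite.of_equiv _ (relCycleFiberEquiv R hn u).symm
  rw [← Nat.card_congr (Equiv.sigmaFiberEquiv fun g : RelCycle R n => g.1 0), Nat.card_sigma,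
    Nat.cast_sum]
  exact sum_congr rfl fun u _ => by
    rw [Matrix.diag_apply, Matrix.of_ite_pow_apply, Nat.card_congr (relCycleFiberEquiv R hn u)]

end walks

theorem Function.Periodic.eq_of_intModEq {α : Type*} {x : ℤ → α} {n a b : ℤ} (hx : Periodic x n)
    (h : a ≡ b [ZMOD n]) : x a = x b := by
  obtain ⟨c, hc⟩ := h.dvd
  rw [show b = a + c * n by linarith]
  exact (hx.int_mul c a).symm

variable {A : Type}

def window {ℓ : ℕ} (x : ℤ → A) (p : ℤ) : Word A ℓ := fun k => x (p + k)

theorem Function.Periodic.window_eq {ℓ : ℕ} {x : ℤ → A} {n a b : ℤ} (hx : Periodic x n)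
    (h : a ≡ b [ZMOD n]) : (window x a : Word A ℓ) = window x b :=
  funext fun k => hx.eq_of_intModEq (h.add_right k)

section periodize

variable {n : ℕ} (hn : 0 < n)

theorem periodize_natCast (f : Fin n → A) (m : ℕ) :
    periodize hn f m = f ⟨m % n, Nat.mod_lt m hn⟩ := by
  simp only [periodize, ← Int.natCast_mod, Int.toNat_natCast]

theorem periodic_periodize (f : Fin n → A) : Periodic (periodize hn f) n := by
  intro j
  simp only [periodize, Int.add_emod_right]

theorem periodize_restrict {x : ℤ → A} (hx : Periodic x n) :
    periodize hn (fun k : Fin n => x k) = x := by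
  funext j
  refine hx.eq_of_intModEq ?_
  rw [Int.toNat_of_nonneg (Int.emod_nonneg j (by omega))]
  exact Int.mod_modEq j n

def periodicEquiv : {x : ℤ → A // Periodic x n} ≃ (Fin n → A) where
  toFun x k := x.1 k
  invFun f := ⟨periodize hn f, periodic_periodize hn f⟩
  left_inv x := Subtype.ext (periodize_restrict hn x.2)
  right_inv f := funext fun k => by
    simp only [periodize_natCast, Nat.mod_eq_of_lt k.2]

end periodize

section words

variable {d : ℕ} [NeZero d]

theorem zAt_eq_apply_mod (z : Fin d → Bool) (m : ℕ) :
    zAt z m = z ⟨m % d, Nat.mod_lt m (NeZero.pos d)⟩ :=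
  dif_pos _

theorem zAt_val (z : Fin d → Bool) (r : Fin d) : zAt z r = z r := by
  simp [zAt_eq_apply_mod, Nat.mod_eq_of_lt r.2]

theorem periodic_zAt (z : Fin d → Bool) : Periodic (zAt z) d := by
  intro m
  simp [zAt_eq_apply_mod]

theorem zAt_injective : Injective (zAt : (Fin d → Bool) → ℕ → Bool) :=
  fun z y h => funext fun r => by rw [← zAt_val z r, h, zAt_val]

def rotWord (z : Fin d → Bool) : Fin d → Bool := fun r => zAt z (r + 1)

theorem zAt_rotWord (z : Fin d → Bool) (m : ℕ) : zAt (rotWord z) m = zAt z (m + 1) := by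
  rw [zAt_eq_apply_mod (rotWord z)]
  change zAt z (m % d + 1) = _
  rw [← (periodic_zAt z).map_mod_nat, Nat.mod_add_mod, (periodic_zAt z).map_mod_nat]

theorem zAt_rotWord_iterate (z : Fin d → Bool) (t m : ℕ) :
    zAt (rotWord^[t] z) m = zAt z (m + t) := by
  induction t generalizing m with
  | zero => rfl
  | succ t ih => rw [iterate_succ_apply', zAt_rotWord, ih, add_right_comm, add_assoc]

theorem isPeriodicPt_rotWord_iff {z : Fin d → Bool} {p : ℕ} :
    IsPeriodicPt rotWord p z ↔ Periodic (zAt z) p := by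
  rw [IsPeriodicPt, IsFixedPt, ← zAt_injective.eq_iff, funext_iff]
  simp only [zAt_rotWord_iterate, Periodic]

theorem primLen_eq_minimalPeriod (z : Fin d → Bool) : primLen z = minimalPeriod rotWord z := by
  have hd : IsPeriodicPt rotWord d z := isPeriodicPt_rotWord_iff.mpr (periodic_zAt z)
  have hmin := isPeriodicPt_minimalPeriod rotWord z
  refine le_antisymm (Nat.sInf_le ⟨hd.minimalPeriod_pos (NeZero.pos d), hd.minimalPeriod_dvd,
    isPeriodicPt_rotWord_iff.mp hmin⟩) (le_csInf ⟨d, NeZero.pos d, dvd_rfl, periodic_zAt z⟩ ?_)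
  rintro L ⟨hL, -, hper⟩
  exact (isPeriodicPt_rotWord_iff.mpr hper).minimalPeriod_le hL

theorem card_true_eq_sum_range (z : Fin d → Bool) :
    #{r | z r} = ∑ m ∈ range d, if zAt z m then 1 else 0 := by
  rw [card_filter, ← Fin.sum_univ_eq_sum_range (fun m => if zAt z m then 1 else 0)]
  simp only [zAt_val]

theorem card_true_rotWord_iterate (z : Fin d → Bool) (t : ℕ) :
    #{r | (rotWord^[t] z) r} = #{r | z r} := by
  induction t with
  | zero => rfl
  | succ t ih =>
    rw [iterate_succ_apply', card_true_eq_sum_range, ← ih, card_true_eq_sum_range]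
    simp only [zAt_rotWord]
    exact ((periodic_zAt (rotWord^[t] z)).comp fun b => if b then 1 else 0).sum_range_comp_add_one

theorem card_true_eq_primCopies_mul_primOnes (z : Fin d → Bool) :
    #{r | z r} = primCopies z * primOnes z := by
  have hper : IsPeriodicPt rotWord (primLen z) z := by
    rw [primLen_eq_minimalPeriod]
    exact isPeriodicPt_minimalPeriod rotWord z
  have hdvd : primLen z ∣ d := by
    rw [primLen_eq_minimalPeriod]
    exact (isPeriodicPt_rotWord_iff.mpr (periodic_zAt z)).minimalPeriod_dvd
  have hsum := ((isPeriodicPt_rotWord_iff.mp hper).comp fun b => if b then 1 else 0).sum_range_mul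
    (d / primLen z)
  rw [Nat.div_mul_cancel hdvd] at hsum
  rw [card_true_eq_sum_range, primOnes, card_filter, primCopies, ← smul_eq_mul]
  exact hsum

theorem eq_rotWord_iterate_iff {z y : Fin d → Bool} {q : ℕ} :
    z = rotWord^[q] y ↔ ∀ m, zAt z m = zAt y (m + q) := by
  rw [← zAt_injective.eq_iff, funext_iff]
  simp only [zAt_rotWord_iterate]

theorem rotWord_iterate_inv (z : Fin d → Bool) (i : ℕ) :
    rotWord^[d * i - i] (rotWord^[i] z) = z := by
  rw [← iterate_add_apply, Nat.sub_add_cancel (Nat.le_mul_of_pos_left i (NeZero.pos d))]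
  exact ((isPeriodicPt_rotWord_iff.mpr (periodic_zAt z)).mul_const i).eq

/-- Every nonzero word is, in exactly one way, a rotation `rotWord^[i] z` of its representative
`z ∈ Ω` with `i` less than the length of the primitive root of `z`. -/
theorem IsRepSet.sum_sum_range_rotWord {M : Type*} [AddCommMonoid M]
    {Ω : Finset (Fin d → Bool)} (hΩ : IsRepSet Ω) (g : (Fin d → Bool) → M) :
    ∑ z ∈ Ω, ∑ i ∈ range (minimalPeriod rotWord z), g (rotWord^[i] z) =
      ∑ y ∈ univ.filter (fun y : Fin d → Bool => ∃ r, y r), g y := by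
  have hrep {z y : Fin d → Bool} (hz : z ∈ Ω) (i : ℕ) (hy : rotWord^[i] z = y) :
      ∃ q, ∀ m, zAt z m = zAt y (m + q) :=
    ⟨d * i - i, eq_rotWord_iterate_iff.mp (hy ▸ (rotWord_iterate_inv z i).symm)⟩
  have hnonzero {z : Fin d → Bool} (hz : z ∈ Ω) (i : ℕ) : ∃ r, (rotWord^[i] z) r := by
    have h0 : 0 < #{r | z r} :=
      card_pos.mpr ⟨⟨0, NeZero.pos d⟩, by simpa [zAt_eq_apply_mod] using hΩ.1 z hz⟩
    rw [← card_true_rotWord_iterate z i] at h0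
    obtain ⟨r, hr⟩ := card_pos.mp h0
    exact ⟨r, (mem_filter.mp hr).2⟩
  rw [sum_sigma']
  refine sum_bij (fun p _ => rotWord^[p.2] p.1) (fun p hp => ?_) ?_ (fun y hy => ?_)
    (fun _ _ => rfl)
  · simpa using hnonzero (mem_sigma.mp hp).1 p.2
  · rintro ⟨z, i⟩ hp ⟨z', i'⟩ hp' h
    obtain ⟨hz, hi⟩ := mem_sigma.mp hp
    obtain ⟨hz', hi'⟩ := mem_sigma.mp hp'
    obtain ⟨w, -, huniq⟩ := hΩ.2 _ (hnonzero hz i)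
    obtain rfl : z = z' :=
      (huniq _ ⟨hz, hrep hz i rfl⟩).trans (huniq _ ⟨hz', hrep hz' i' h.symm⟩).symm
    exact Sigma.ext rfl (heq_of_eq (iterate_injOn_Iio_minimalPeriod
      (mem_range.mp hi) (mem_range.mp hi') h))
  · obtain ⟨z, ⟨hz, q, hq⟩, -⟩ := hΩ.2 y (mem_filter.mp hy).2
    have hpos : 0 < minimalPeriod rotWord z :=
      (isPeriodicPt_rotWord_iff.mpr (periodic_zAt z)).minimalPeriod_pos (NeZero.pos d)
    refine ⟨⟨z, (d * q - q) % minimalPeriod rotWord z⟩,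
      mem_sigma.mpr ⟨hz, mem_range.mpr (Nat.mod_lt _ hpos)⟩, ?_⟩
    rw [iterate_mod_minimalPeriod_eq, eq_rotWord_iterate_iff.mpr hq, rotWord_iterate_inv]

end words

section pft

variable {ℓ T n : ℕ} (F0 : Set (Word A ℓ))

/-- By Bézout, `T ℤ + n ℤ = gcd(n, T) ℤ`: for `n`-periodic `x`, the windows at the positions
`T ℤ + r` are those at the positions `gcd(n, T) ℤ + r`. -/
theorem mem_pftSF_iff_of_periodic (hn : 0 < n) (hT : 0 < T) {x : ℤ → A}
    (hx : Periodic x n) :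
    x ∈ pftSF F0 T ↔
      ∃ r < Nat.gcd n T, ∀ j : ℕ, j % Nat.gcd n T = r → window x j ∉ F0 := by
  set d := Nat.gcd n T
  constructor
  · rintro ⟨r, -, hr⟩
    refine ⟨r % d, Nat.mod_lt r (Nat.gcd_pos_of_pos_right n hT), fun j hj => ?_⟩
    obtain ⟨c, hc⟩ := Nat.modEq_iff_dvd.mp hj
    have hbez : (d : ℤ) = n * Nat.gcdA n T + T * Nat.gcdB n T := Nat.gcd_eq_gcd_ab n T
    have hmod : (j : ℤ) ≡ T * (-Nat.gcdB n T * c) + r [ZMOD n] :=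
      Int.modEq_iff_dvd.mpr ⟨Nat.gcdA n T * c, by linear_combination hc + c * hbez⟩
    rw [hx.window_eq hmod]
    exact hr _ (dvd_mul_right _ _)
  · rintro ⟨r, hrd, hr⟩
    refine ⟨r, hrd.trans_le (Nat.le_of_dvd hT (Nat.gcd_dvd_right n T)), fun i hi => ?_⟩
    set j := ((i + r) % n).toNat
    have hj : (j : ℤ) ≡ i + r [ZMOD n] := by
      rw [Int.toNat_of_nonneg (Int.emod_nonneg _ (by omega))]
      exact Int.mod_modEq _ _
    have hjd : j ≡ r [MOD d] := by
      have hid : i ≡ 0 [ZMOD d] := Int.modEq_zero_iff_dvd.mpr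
        ((Int.natCast_dvd_natCast.mpr (Nat.gcd_dvd_right n T)).trans hi)
      refine Int.natCast_modEq_iff.mp
        ((hj.of_dvd (Int.natCast_dvd_natCast.mpr (Nat.gcd_dvd_left n T))).trans ?_)
      simpa using hid.add_right (r : ℤ)
    show window x (i + r) ∉ F0
    rw [hx.window_eq hj.symm]
    exact hr j (Eq.trans hjd (Nat.mod_eq_of_lt hrd))

theorem pftPer_eq_pftPer_gcd (hn : 0 < n) (hT : 0 < T) :
    pftPer F0 T n = pftPer F0 (Nat.gcd n T) n := by
  ext x
  refine and_congr_left fun hx => ?_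
  rw [mem_pftSF_iff_of_periodic F0 hn hT hx,
    mem_pftSF_iff_of_periodic F0 hn (Nat.gcd_pos_of_pos_right n hT) hx,
    Nat.gcd_gcd_self_right_left]

theorem mem_pftPer_iff (hn : 0 < n) (hT : 0 < T) {x : ℤ → A} :
    x ∈ pftPer F0 T n ↔ Periodic x n ∧
      ∃ r : Fin (Nat.gcd n T), ∀ j : ℕ, j % Nat.gcd n T = r → window x j ∉ F0 := by
  change x ∈ pftSF F0 T ∧ Periodic x n ↔ _
  rw [and_comm]
  exact and_congr_right fun hx => (mem_pftSF_iff_of_periodic F0 hn hT hx).trans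
    (by simp only [Fin.exists_iff, exists_prop])

def pftPerEquiv (hn : 0 < n) (hT : 0 < T) :
    pftPer F0 T n ≃ {f : Fin n → A // ∃ r : Fin (Nat.gcd n T),
      ∀ j : ℕ, j % Nat.gcd n T = r → window (periodize hn f) j ∉ F0} :=
  (Equiv.subtypeEquivRight fun _ => mem_pftPer_iff F0 hn hT).trans <|
    (Equiv.subtypeSubtypeEquivSubtypeInter (fun x : ℤ → A => Periodic x n) fun x =>
      ∃ r : Fin (Nat.gcd n T), ∀ j : ℕ, j % Nat.gcd n T = r → window x j ∉ F0).symm.trans <|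
      (periodicEquiv hn).subtypeEquiv fun x => by
        simp only [periodicEquiv, Equiv.coe_fn_mk, periodize_restrict hn x.2]

theorem card_pftPer_eq_sum [Fintype A] {R : Type*} [CommRing R] (hn : 0 < n) (hT : 0 < T) :
    (Nat.card (pftPer F0 T n) : R) =
      ∑ y ∈ univ.filter (fun y : Fin (Nat.gcd n T) → Bool => ∃ r, y r),
        (-1 : R) ^ (#{r | y r} - 1) * (Nat.card {f : Fin n → A //
          ∀ j : ℕ, zAt y j → window (periodize hn f) j ∉ F0} : R) := by
  have : NeZero (Nat.gcd n T) := ⟨(Nat.gcd_pos_of_pos_right n hT).ne'⟩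
  rw [Nat.card_congr (pftPerEquiv F0 hn hT), card_exists_eq_sum_neg_one_pow]
  refine sum_congr (by ext; simp) fun y _ => congrArg _ (congrArg Nat.cast (Nat.card_congr
    (Equiv.subtypeEquivRight fun f => ⟨fun h j hj => ?_, fun h r hr j hj => ?_⟩)))
  · exact h _ (by rwa [zAt_eq_apply_mod] at hj) j rfl
  · rw [← Fin.ext (a := ⟨j % _, Nat.mod_lt j (NeZero.pos _)⟩) hj, ← zAt_eq_apply_mod y j] at hr
    exact h j hr

end pft

namespace WBG

variable {ℓ L n : ℕ}

abbrev Adj (G : WBG A ℓ L) (u v : G.Vertex) : Prop := ∃ a, G.Edge u v a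

theorem phase_apply_of_relCycle {G : WBG A ℓ L} (s : RelCycle G.Adj n) (m : ℕ) :
    ((s.1 m).1.1 : ℕ) = ((s.1 0).1.1 + m) % L := by
  induction m with
  | zero => exact (Nat.mod_eq_of_lt (s.1 0).1.1.2).symm
  | succ m ih =>
    obtain ⟨_, hphase, -⟩ := s.2.2 m
    rw [hphase, ih, Nat.mod_add_mod, add_assoc]

theorem word_apply_of_relCycle {G : WBG A ℓ L} (hℓ : 0 < ℓ) (s : RelCycle G.Adj n)
    (m k : ℕ) (hk : k < ℓ) :
    (s.1 m).1.2 ⟨k, hk⟩ = (s.1 (m + k)).1.2 ⟨0, hℓ⟩ := by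
  induction k generalizing m with
  | zero => rfl
  | succ k ih =>
    obtain ⟨_, -, hshift, -⟩ := s.2.2 m
    rw [hshift k hk, ih, add_right_comm, add_assoc]

theorem window_periodize_of_relCycle {G : WBG A ℓ L} (hℓ : 0 < ℓ) (hn : 0 < n)
    (s : RelCycle G.Adj n) (m : ℕ) :
    window (periodize hn fun k : Fin n => (s.1 k).1.2 ⟨0, hℓ⟩) m = (s.1 m).1.2 := by
  funext k
  rw [word_apply_of_relCycle hℓ s m k k.2]
  simp only [window, ← Nat.cast_add, periodize_natCast, s.2.1.map_mod_nat]

variable [NeZero L]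

abbrev Labelling (G : WBG A ℓ L) (hn : 0 < n) : Type :=
  {p : Fin L × (Fin n → A) //
    ∀ j : ℕ, window (periodize hn p.2) j ∈ G.V (Fin.ofNat L (p.1 + j))}

/-- A closed walk is determined by its initial phase and the first letters of its vertices. -/
def relCycleEquivLabelling {G : WBG A ℓ L} (hℓ : 0 < ℓ) (hn : 0 < n) (hLn : L ∣ n) :
    RelCycle G.Adj n ≃ Labelling G hn where
  toFun s := ⟨((s.1 0).1.1, fun k => (s.1 k).1.2 ⟨0, hℓ⟩), fun j => by
    rw [window_periodize_of_relCycle hℓ hn s j]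
    convert (s.1 j).2
    exact Fin.ext ((Fin.val_ofNat _ _).trans (phase_apply_of_relCycle s j).symm)⟩
  invFun p := ⟨fun m => ⟨(Fin.ofNat L (p.1.1 + m), window (periodize hn p.1.2) m), p.2 m⟩,
    fun m => Subtype.ext (Prod.ext
      (Fin.ext (by
        simp only [Fin.val_ofNat, ← add_assoc]
        exact (Nat.modEq_zero_iff_dvd.mpr hLn).add_left _))
      ((periodic_periodize hn p.1.2).window_eq (by simp))),
    fun m => ⟨periodize hn p.1.2 ((m + 1 : ℕ) + (ℓ - 1 : ℕ)),
      by simp [Nat.mod_add_mod, add_assoc],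
      fun k _ => by simp only [window]; congr 1; push_cast; ring, fun _ => rfl⟩⟩
  left_inv s := Subtype.ext (funext fun m => Subtype.ext (Prod.ext
    (Fin.ext ((Fin.val_ofNat _ _).trans (phase_apply_of_relCycle s m).symm))
    (window_periodize_of_relCycle hℓ hn s m)))
  right_inv p := Subtype.ext (Prod.ext (Fin.ext (by simp))
    (funext fun k => by simp [window, periodize_natCast, Nat.mod_eq_of_lt k.2]))

theorem trace_adjMatrix_pow [Fintype A] (G : WBG A ℓ L) (hℓ : 0 < ℓ)
    (hn : 0 < n) (hLn : L ∣ n) :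
    Matrix.trace (G.adjMatrix ^ n) = ∑ i : Fin L, (Nat.card {f : Fin n → A //
      ∀ j : ℕ, window (periodize hn f) j ∈ G.V (Fin.ofNat L (i + j))} : ℚ) := by
  classical
  rw [WBG.adjMatrix, Matrix.trace_of_ite_pow _ hn,
    Nat.card_congr ((relCycleEquivLabelling hℓ hn hLn).trans
      (Equiv.subtypeProdEquivSigmaSubtype fun (i : Fin L) (f : Fin n → A) =>
        ∀ j : ℕ, window (periodize hn f) j ∈ G.V (Fin.ofNat L (i + j)))),
    Nat.card_sigma, Nat.cast_sum]

end WBG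

theorem trace_zGraph_adjMatrix_pow [Fintype A] {ℓ d n : ℕ} [NeZero d] (F0 : Set (Word A ℓ))
    (z : Fin d → Bool) (hℓ : 0 < ℓ) (hn : 0 < n) (hdn : d ∣ n) :
    Matrix.trace ((zGraph F0 z).adjMatrix ^ n) =
      ∑ i ∈ range (minimalPeriod rotWord z), (Nat.card {f : Fin n → A //
        ∀ j : ℕ, zAt (rotWord^[i] z) j → window (periodize hn f) j ∉ F0} : ℚ) := by
  have hper : IsPeriodicPt rotWord (primLen z) z := by
    rw [primLen_eq_minimalPeriod]
    exact isPeriodicPt_minimalPeriod rotWord z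
  have hdvd : primLen z ∣ n := by
    rw [primLen_eq_minimalPeriod]
    exact (isPeriodicPt_rotWord_iff.mpr (periodic_zAt z)).minimalPeriod_dvd.trans hdn
  have : NeZero (primLen z) := ⟨(Nat.pos_of_dvd_of_pos hdvd hn).ne'⟩
  rw [WBG.trace_adjMatrix_pow _ hℓ hn hdvd, ← primLen_eq_minimalPeriod,
    Fin.sum_univ_eq_sum_range (fun i => (Nat.card {f : Fin n → A // ∀ j : ℕ,
      window (periodize hn f) j ∈ (zGraph F0 z).V (Fin.ofNat _ (i + j))} : ℚ))]
  refine sum_congr rfl fun i _ => congrArg Nat.cast (Nat.card_congr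
    (Equiv.subtypeEquivRight fun f => forall_congr' fun j => ?_))
  simp only [zGraph, Fin.val_ofNat, (isPeriodicPt_rotWord_iff.mp hper).map_mod_nat,
    zAt_rotWord_iterate, add_comm j i]
  cases zAt z (i + j) <;> simp

theorem pft_card_periodic_eq_trace_sum_general {A : Type} [Fintype A] {ℓ T n : ℕ}
    (hℓ : 1 ≤ ℓ) (hT : 1 ≤ T) (hn : 1 ≤ n) (F0 : Set (Word A ℓ))
    (Ω : Finset (Fin (Nat.gcd n T) → Bool)) (hΩ : IsRepSet Ω) :
    Nat.card (pftPer F0 T n) = Nat.card (pftPer F0 (Nat.gcd n T) n) ∧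
    (Nat.card (pftPer F0 T n) : ℚ) =
      ∑ z ∈ Ω, (-1 : ℚ) ^ (primCopies z * primOnes z - 1) *
        Matrix.trace ((zGraph F0 z).adjMatrix ^ n) := by
  have : NeZero (Nat.gcd n T) := ⟨(Nat.gcd_pos_of_pos_left T hn).ne'⟩
  refine ⟨by rw [pftPer_eq_pftPer_gcd F0 hn hT], ?_⟩
  rw [card_pftPer_eq_sum F0 hn hT, ← hΩ.sum_sum_range_rotWord]
  refine sum_congr rfl fun z _ => ?_
  rw [trace_zGraph_adjMatrix_pow F0 z hℓ hn (Nat.gcd_dvd_left n T), mul_sum]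
  refine sum_congr rfl fun i _ => ?_
  rw [card_true_rotWord_iterate, card_true_eq_primCopies_mul_primOnes]

/-- **Lemma (trace formula for the number of periodic points).** For a PFT
`X = X(F⁰, ℓ, T)` in standard form, `n ≥ 1`, `d = gcd(n,T)`, and `X_d = X(F⁰, ℓ, d)`:
`|P_n(X)| = |P_n(X_d)| = Σ_{z ∈ Ω_d} (-1)^{d W_z / L_z - 1} tr(A_z^n)`,
where `d W_z / L_z = N_z W_z` is the number of `1`s in `z`. -/
theorem pft_card_periodic_eq_trace_sum {A : Type} [Fintype A] [Nonempty A] {ℓ T n : ℕ}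
    (hℓ : 1 ≤ ℓ) (hT : 1 ≤ T) (hn : 1 ≤ n) (F0 : Set (Word A ℓ))
    (Ω : Finset (Fin (Nat.gcd n T) → Bool)) (hΩ : IsRepSet Ω) :
    Nat.card (pftPer F0 T n) = Nat.card (pftPer F0 (Nat.gcd n T) n) ∧
    (Nat.card (pftPer F0 T n) : ℚ) =
      ∑ z ∈ Ω, (-1 : ℚ) ^ (primCopies z * primOnes z - 1) *
        Matrix.trace ((zGraph F0 z).adjMatrix ^ n) :=
  pft_card_periodic_eq_trace_sum_general hℓ hT hn F0 Ω hΩ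
end

section
/- Let X = X(F⁰, ℓ, T) be a PFT in standard form over a finite alphabet Σ, let n ≥ 1 be an integer, let d = gcd(n, T), and let X_d = X(F⁰, ℓ, d) be the PFT with the same forbidden set F⁰ and period d. Then for every bi-infinite sequence x over Σ, x ∈ P_n(X) if and only if x ∈ P_n(X_d). -/
open scoped BigOperators

/-!
Only the residue of the shift `r` matters, so `x ∈ X(F⁰, ℓ, T)` says that the set of positions
`j` where the window of `x` at `j` avoids `F⁰` contains a coset `r + Tℤ`. For an `n`-periodic `x`
that set is invariant under `nℤ`, hence contains `r + Tℤ + nℤ = r + gcd(n, T)ℤ`; conversely a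
coset of `gcd(n, T)ℤ` contains a coset of `Tℤ`.
-/

namespace PFT

variable {A : Type} {ℓ : ℕ}

def window (x : ℤ → A) (j : ℤ) : Word A ℓ := fun k => x (j + k)

theorem periodic_window {x : ℤ → A} {c : ℤ} (hx : Function.Periodic x c) :
    Function.Periodic (window (ℓ := ℓ) x) c := fun j => by
  funext k
  simp only [window, add_right_comm j c]
  exact hx _

theorem mem_pftSF_iff_exists_int {F0 : Set (Word A ℓ)} {T : ℕ} (hT : 0 < T) (x : ℤ → A) :
    x ∈ pftSF F0 T ↔ ∃ r : ℤ, ∀ i : ℤ, (T : ℤ) ∣ i → window x (i + r) ∉ F0 := by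
  constructor
  · rintro ⟨r, -, hr⟩
    exact ⟨r, hr⟩
  · rintro ⟨r, hr⟩
    have hT' : (0 : ℤ) < T := by exact_mod_cast hT
    refine ⟨(r % T).toNat, by have := Int.emod_lt_of_pos r hT'; omega, fun i hi => ?_⟩
    have hshift : i + ((r % T).toNat : ℤ) = (i - T * (r / T)) + r := by
      rw [Int.toNat_of_nonneg (Int.emod_nonneg r hT'.ne'), Int.emod_def]
      ring
    rw [hshift]
    exact hr _ (dvd_sub hi (dvd_mul_right _ _))

theorem forall_gcd_dvd_of_periodic {P : ℤ → Prop} {n T : ℕ} (hP : Function.Periodic P (n : ℤ))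
    {r : ℤ} (h : ∀ i : ℤ, (T : ℤ) ∣ i → P (i + r)) :
    ∀ i : ℤ, (Nat.gcd n T : ℤ) ∣ i → P (i + r) := by
  rintro i ⟨e, rfl⟩
  have hbezout : (Nat.gcd n T : ℤ) * e + r
      = (T * (Nat.gcdB n T * e) + r) + (Nat.gcdA n T * e) * n := by
    rw [Nat.gcd_eq_gcd_ab]
    ring
  have hshift := hP.int_mul (Nat.gcdA n T * e) (T * (Nat.gcdB n T * e) + r)
  rw [Int.cast_id] at hshift
  rw [hbezout, hshift]
  exact h _ (dvd_mul_right _ _)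

theorem mem_pftSF_gcd_iff_of_periodic {F0 : Set (Word A ℓ)} {T n : ℕ} (hT : 0 < T) {x : ℤ → A}
    (hx : Function.Periodic x (n : ℤ)) : x ∈ pftSF F0 T ↔ x ∈ pftSF F0 (Nat.gcd n T) := by
  have hd : 0 < Nat.gcd n T := Nat.gcd_pos_of_pos_right n hT
  rw [mem_pftSF_iff_exists_int hT, mem_pftSF_iff_exists_int hd]
  have havoid : Function.Periodic (fun j => window x j ∉ F0) (n : ℤ) :=
    fun j => congrArg (· ∉ F0) (periodic_window hx j)
  have hdT : (Nat.gcd n T : ℤ) ∣ T := Int.natCast_dvd_natCast.mpr (Nat.gcd_dvd_right n T)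
  exact exists_congr fun r =>
    ⟨forall_gcd_dvd_of_periodic havoid, fun h i hi => h i (hdT.trans hi)⟩

end PFT

theorem pft_periodic_mem_iff_gcd_period_general {A : Type} {ℓ T n : ℕ}
    (hT : 1 ≤ T) (F0 : Set (Word A ℓ)) (x : ℤ → A) :
    x ∈ pftPer F0 T n ↔ x ∈ pftPer F0 (Nat.gcd n T) n :=
  and_congr_left fun hx => PFT.mem_pftSF_gcd_iff_of_periodic hT hx

/-- **Proposition.** For a PFT `X = X(F⁰, ℓ, T)` in standard form, `n ≥ 1`, `d = gcd(n,T)`,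
and the PFT `X_d = X(F⁰, ℓ, d)` with the same forbidden set and period `d`:
a bi-infinite sequence lies in `P_n(X)` iff it lies in `P_n(X_d)`. -/
theorem pft_periodic_mem_iff_gcd_period {A : Type} [Fintype A] [Nonempty A] {ℓ T n : ℕ}
    (hℓ : 1 ≤ ℓ) (hT : 1 ≤ T) (hn : 1 ≤ n) (F0 : Set (Word A ℓ)) (x : ℤ → A) :
    x ∈ pftPer F0 T n ↔ x ∈ pftPer F0 (Nat.gcd n T) n :=
  pft_periodic_mem_iff_gcd_period_general hT F0 x
end

section
/- Let G be a WBG over a finite alphabet Σ with word length ℓ, and let C and C̃ be cycles in G of the same positive length, based at vertices u^(i) and v^(j) respectively, where u, v ∈ Σ^ℓ. If the label sequences of C and C̃ are equal, then u = v (i.e., both base vertices correspond to the same word in Σ^ℓ). -/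
open scoped BigOperators

/-!
Along an edge the word of a vertex is shifted left by one letter and the edge label is appended,
so in a bi-infinite walk the word at each vertex is the block of the `ℓ` labels read just before
reaching it. Running around a cycle forever is such a walk, with the periodic repetition of the
cycle's labels as label sequence; hence the base word of a cycle is determined by its labels.
-/

namespace WBG

variable {A : Type} {ℓ T : ℕ} {G : WBG A ℓ T}

theorem word_eq_of_walk {x : ℤ → G.Vertex} {a : ℤ → A}
    (hx : ∀ m, G.Edge (x m) (x (m + 1)) (a m)) (m : ℤ) (k : Fin ℓ) :
    (x m).1.2 k = a (m + k - ℓ) := by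
  obtain ⟨k, hk⟩ := k
  induction hj : ℓ - 1 - k generalizing m k with
  | zero =>
    have hlast := (hx (m - 1)).2.2 (by omega)
    rw [sub_add_cancel] at hlast
    obtain rfl : k = ℓ - 1 := by omega
    rw [hlast]
    congr 1
    push_cast [Nat.cast_sub (by omega : 1 ≤ ℓ)]
    ring
  | succ j ih =>
    have hshift := (hx (m - 1)).2.1 k (by omega)
    rw [sub_add_cancel] at hshift
    rw [← hshift, ih (m - 1) (k + 1) (by omega) (by omega)]
    congr 1
    push_cast
    ring

theorem Path.edge_periodize {n : ℕ} (p : G.Path n) (hn : 0 < n)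
    (hcyc : p.vtx (Fin.last n) = p.vtx 0) (m : ℤ) :
    G.Edge (periodize hn (fun i => p.vtx i.castSucc) m)
      (periodize hn (fun i => p.vtx i.castSucc) (m + 1)) (periodize hn p.lbl m) := by
  have hn' : (0 : ℤ) < n := by exact_mod_cast hn
  have hr := Int.emod_nonneg m hn'.ne'
  have hrn := Int.emod_lt_of_pos m hn'
  let i : Fin n := ⟨(m % n).toNat, by omega⟩
  suffices hsucc : periodize hn (fun i => p.vtx i.castSucc) (m + 1) = p.vtx i.succ from
    hsucc ▸ p.adj i
  rcases (show m % n + 1 < n ∨ m % n + 1 = n by omega) with hlt | heq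
  · simp only [periodize, ← Int.emod_add_emod m, Int.emod_eq_of_lt (by omega) hlt]
    congr 1
    ext
    simp only [Fin.castSucc_mk, Fin.succ_mk, i]
    omega
  · have hlast : i.succ = Fin.last n := by ext; simp only [Fin.succ_mk, Fin.val_last, i]; omega
    simp only [periodize, ← Int.emod_add_emod m, heq, Int.emod_self, hlast, hcyc]
    rfl

theorem Path.word_vtx_zero_eq_periodize {n : ℕ} (p : G.Path n) (hn : 0 < n)
    (hcyc : p.vtx (Fin.last n) = p.vtx 0) (k : Fin ℓ) :
    (p.vtx 0).1.2 k = periodize hn p.lbl (k - ℓ) := by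
  simpa [periodize] using word_eq_of_walk (p.edge_periodize hn hcyc) 0 k

end WBG

theorem wbg_cycles_same_label_same_word_general {A : Type} {ℓ T : ℕ}
    (G : WBG A ℓ T) {n : ℕ} (hn : 0 < n) (C C' : G.Path n) (u v : G.Vertex)
    (hC0 : C.vtx 0 = u) (hC1 : C.vtx (Fin.last n) = u)
    (hC'0 : C'.vtx 0 = v) (hC'1 : C'.vtx (Fin.last n) = v)
    (hlbl : C.lbl = C'.lbl) :
    u.1.2 = v.1.2 := by
  funext k
  rw [← hC0, ← hC'0, C.word_vtx_zero_eq_periodize hn (hC1.trans hC0.symm),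
    C'.word_vtx_zero_eq_periodize hn (hC'1.trans hC'0.symm), hlbl]

/-- **Lemma.** In a WBG, if two cycles of the same positive length, based at vertices
`u^(i)` and `v^(j)` respectively, have equal label sequences, then `u = v` as words
in `Σ^ℓ`. -/
theorem wbg_cycles_same_label_same_word {A : Type} {ℓ T : ℕ} (hℓ : 1 ≤ ℓ)
    (G : WBG A ℓ T) {n : ℕ} (hn : 0 < n) (C C' : G.Path n) (u v : G.Vertex)
    (hC0 : C.vtx 0 = u) (hC1 : C.vtx (Fin.last n) = u)
    (hC'0 : C'.vtx 0 = v) (hC'1 : C'.vtx (Fin.last n) = v)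
    (hlbl : C.lbl = C'.lbl) :
    u.1.2 = v.1.2 :=
  wbg_cycles_same_label_same_word_general G hn C C' u v hC0 hC1 hC'0 hC'1 hlbl
end

section
/- Fix T ≥ 1 and a set of representatives Ω_T. For z = z_0 z_1 ⋯ z_{T−1} ∈ Ω_T and an integer 0 ≤ q ≤ L_z − 1, define J(z, q) = { (q − i) mod T : 0 ≤ i ≤ T−1, z_i = 1 }. Then the map (z, q) ↦ J(z, q) is a bijection from the set of pairs { (z, q) : z ∈ Ω_T, 0 ≤ q ≤ L_z − 1 } onto the set of nonempty subsets of {0, 1, …, T−1}. -/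
open scoped BigOperators

/-! Identify `Fin T` with `ℤ/Tℤ`. Then `zAt z m = z m`, the defining condition of `primLen` says
that `L` is a period of `z` on the cyclic group, and `j ∈ J(z, q) ↔ z (q - j) = 1`. Equal sets
`J(z, q) = J(z', q')` therefore force `z` and `z'` to be cyclic shifts of each other by
`q' - q`; as representatives they coincide, so `q' - q` is a period of `z`, and since the gcd of
two periods is again a period, no positive period is shorter than `L_z`, whence `q = q'`. Conversely, `J` is `J(y, 0)` for the indicator
`y` of `-J`, and replacing `y` by its representative only changes `q`, which may then be
reduced modulo `L_z`. -/

section CyclicWords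

open Fin.CommRing Function

variable {T : ℕ} [NeZero T]

lemma zAt_eq_apply_natCast (z : Fin T → Bool) (m : ℕ) : zAt z m = z m := by
  rw [zAt, dif_pos (Nat.mod_lt _ (NeZero.pos T))]
  exact congrArg z (Fin.ext (Fin.val_natCast m T).symm)

lemma zAt_periodic_iff (z : Fin T → Bool) (L : ℕ) :
    (∀ m, zAt z (m + L) = zAt z m) ↔ Periodic z (L : Fin T) := by
  simp only [zAt_eq_apply_natCast, Nat.cast_add]
  exact ⟨fun h i => by simpa only [Fin.cast_val_eq_self] using h i, fun h m => h m⟩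

lemma zAt_shift_iff (z y : Fin T → Bool) :
    (∃ q : ℕ, ∀ m : ℕ, zAt z m = zAt y (m + q)) ↔ ∃ c : Fin T, ∀ i, z i = y (i + c) := by
  simp only [zAt_eq_apply_natCast, Nat.cast_add]
  constructor
  · rintro ⟨q, h⟩
    exact ⟨q, fun i => by simpa only [Fin.cast_val_eq_self] using h i⟩
  · rintro ⟨c, h⟩
    exact ⟨c, fun m => by rw [Fin.cast_val_eq_self]; exact h m⟩

lemma Function.Periodic.natCast_gcd {α : Type*} {f : Fin T → α} {d : ℕ}
    (h : Periodic f (d : Fin T)) : Periodic f (Nat.gcd d T : Fin T) := by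
  have hgcd : ((Nat.gcd d T : ℕ) : Fin T) = (d.gcdA T : ℤ) * (d : Fin T) := by
    rw [← Int.cast_natCast, Nat.gcd_eq_gcd_ab]
    push_cast
    rw [Fin.natCast_self]
    ring
  rw [hgcd]
  exact h.int_mul _

lemma primLen_spec (z : Fin T → Bool) :
    0 < primLen z ∧ Periodic z (primLen z : Fin T) := by
  have hT : T ∈ {L : ℕ | 0 < L ∧ L ∣ T ∧ ∀ m : ℕ, zAt z (m + L) = zAt z m} :=
    ⟨NeZero.pos T, dvd_rfl, (zAt_periodic_iff z T).2 (by simp)⟩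
  obtain ⟨hpos, -, hper⟩ : primLen z ∈ _ := Nat.sInf_mem ⟨T, hT⟩
  exact ⟨hpos, (zAt_periodic_iff z _).1 hper⟩

lemma primLen_le_of_dvd {z : Fin T → Bool} {L : ℕ} (hL : 0 < L) (hdvd : L ∣ T)
    (h : Periodic z (L : Fin T)) : primLen z ≤ L :=
  Nat.sInf_le ⟨hL, hdvd, (zAt_periodic_iff z L).2 h⟩

lemma primLen_le_of_periodic {z : Fin T → Bool} {d : ℕ} (hd : 0 < d)
    (h : Periodic z (d : Fin T)) : primLen z ≤ d :=
  (primLen_le_of_dvd (Nat.gcd_pos_of_pos_left T hd) (Nat.gcd_dvd_right d T) h.natCast_gcd).trans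
    (Nat.le_of_dvd hd (Nat.gcd_dvd_left d T))

lemma eq_of_periodic_sub {z : Fin T → Bool} {q q' : ℕ} (hq : q < primLen z)
    (hq' : q' < primLen z) (h : Periodic z ((q' : Fin T) - q)) : q = q' := by
  wlog hle : q ≤ q' generalizing q q'
  · exact (this hq' hq (by simpa using h.neg) (le_of_not_ge hle)).symm
  by_contra hne
  have hper : Periodic z ((q' - q : ℕ) : Fin T) := by rwa [Nat.cast_sub hle]
  have := primLen_le_of_periodic (Nat.sub_pos_of_lt (lt_of_le_of_ne hle hne)) hper
  omega

lemma mem_Jset_iff (z : Fin T → Bool) (q : ℕ) (j : Fin T) :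
    j ∈ Jset z q ↔ z (q - j) = true := by
  have hidx : ∀ i : Fin T, (j : ℕ) = (q + T - i) % T ↔ i = q - j := by
    intro i
    rw [eq_sub_iff_add_eq, ← eq_sub_iff_add_eq', Fin.ext_iff, Fin.val_sub, Fin.val_natCast,
      Nat.add_mod_mod, show q + T - i = T - i + q by omega]
  simp only [Jset, Set.mem_ofPred_eq, hidx, exists_eq_right]

lemma Jset_nonempty {z : Fin T → Bool} (hz : z 0 = true) (q : ℕ) : (Jset z q).Nonempty :=
  ⟨q, (mem_Jset_iff z q q).2 (by rwa [sub_self])⟩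

lemma Jset_mod_of_periodic {z : Fin T → Bool} {L : ℕ} (h : Periodic z (L : Fin T)) (q : ℕ) :
    Jset z (q % L) = Jset z q := by
  ext j
  have hq : ((q : ℕ) : Fin T) - j = ((q % L : ℕ) : Fin T) - j + (q / L : ℕ) * L := by
    conv_lhs => rw [← Nat.mod_add_div' q L]
    push_cast
    ring
  rw [mem_Jset_iff, mem_Jset_iff, hq, h.nat_mul]

lemma apply_eq_apply_add_of_Jset_eq {z z' : Fin T → Bool} {q q' : ℕ}
    (h : Jset z q = Jset z' q') (i : Fin T) : z i = z' (i + ((q' : Fin T) - q)) := by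
  have hi := Set.ext_iff.1 h ((q : Fin T) - i)
  rw [mem_Jset_iff, mem_Jset_iff, sub_sub_cancel] at hi
  rw [show i + ((q' : Fin T) - q) = q' - (q - i) by ring]
  exact Bool.eq_iff_iff.2 hi

namespace IsRepSet

variable {Ω : Finset (Fin T → Bool)}

lemma apply_zero (hΩ : IsRepSet Ω) {z : Fin T → Bool} (hz : z ∈ Ω) : z 0 = true := by
  simpa [zAt_eq_apply_natCast] using hΩ.1 z hz

lemma exists_mem_shift (hΩ : IsRepSet Ω) {y : Fin T → Bool} (hy : ∃ i, y i = true) :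
    ∃ z ∈ Ω, ∃ c : Fin T, ∀ i, z i = y (i + c) := by
  obtain ⟨z, ⟨hz, hshift⟩, -⟩ := hΩ.2 y hy
  exact ⟨z, hz, (zAt_shift_iff z y).1 hshift⟩

lemma eq_of_shift (hΩ : IsRepSet Ω) {z z' : Fin T → Bool} (hz : z ∈ Ω) (hz' : z' ∈ Ω)
    {c : Fin T} (h : ∀ i, z i = z' (i + c)) : z = z' :=
  (hΩ.2 z' ⟨0, hΩ.apply_zero hz'⟩).unique ⟨hz, (zAt_shift_iff z z').2 ⟨c, h⟩⟩
    ⟨hz', (zAt_shift_iff z' z').2 ⟨0, by simp⟩⟩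

lemma eq_of_Jset_eq (hΩ : IsRepSet Ω) {z z' : Fin T → Bool} {q q' : ℕ} (hz : z ∈ Ω)
    (hz' : z' ∈ Ω) (hq : q < primLen z) (hq' : q' < primLen z') (h : Jset z q = Jset z' q') :
    z = z' ∧ q = q' := by
  have hshift := apply_eq_apply_add_of_Jset_eq h
  obtain rfl := hΩ.eq_of_shift hz hz' hshift
  exact ⟨rfl, eq_of_periodic_sub hq hq' fun i => (hshift i).symm⟩

lemma exists_Jset_eq (hΩ : IsRepSet Ω) {J : Set (Fin T)} (hJ : J.Nonempty) :
    ∃ z ∈ Ω, ∃ q < primLen z, Jset z q = J := by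
  classical
  obtain ⟨j₀, hj₀⟩ := hJ
  obtain ⟨z, hz, c, hzy⟩ :=
    hΩ.exists_mem_shift (y := fun i => decide (-i ∈ J)) ⟨-j₀, by simpa using hj₀⟩
  obtain ⟨hL, hper⟩ := primLen_spec z
  refine ⟨z, hz, (-c : Fin T).val % primLen z, Nat.mod_lt _ hL, ?_⟩
  ext j
  rw [Jset_mod_of_periodic hper, mem_Jset_iff, hzy, Fin.cast_val_eq_self]
  simp

end IsRepSet

end CyclicWords

/-- **Lemma.** The map `(z, q) ↦ J(z,q) = {(q - i) mod T : z_i = 1}` is a bijection from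
the pairs `{(z,q) : z ∈ Ω_T, 0 ≤ q ≤ L_z - 1}` onto the nonempty subsets of
`{0, 1, …, T-1}`. -/
theorem Jset_bijOn {T : ℕ} (hT : 1 ≤ T) (Ω : Finset (Fin T → Bool)) (hΩ : IsRepSet Ω) :
    Set.BijOn (fun p : (Fin T → Bool) × ℕ => Jset p.1 p.2)
      {p : (Fin T → Bool) × ℕ | p.1 ∈ Ω ∧ p.2 < primLen p.1}
      {J : Set (Fin T) | J.Nonempty} := by
  have : NeZero T := ⟨by omega⟩
  refine ⟨fun p hp => Jset_nonempty (hΩ.apply_zero hp.1) p.2, ?_, ?_⟩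
  · rintro ⟨z, q⟩ ⟨hz, hq⟩ ⟨z', q'⟩ ⟨hz', hq'⟩ h
    obtain ⟨rfl, rfl⟩ := hΩ.eq_of_Jset_eq hz hz' hq hq' h
    rfl
  · intro J hJ
    obtain ⟨z, hz, q, hq, hJq⟩ := hΩ.exists_Jset_eq hJ
    exact ⟨(z, q), ⟨hz, hq⟩, hJq⟩
end

section
/- Let W ≥ 1 and s ≥ 1 be integers, and define β(W, s) = Σ_{r | s} μ(r) · (−1)^{(s/r)·W − 1}, where the sum is over the positive divisors r of s and μ is the Möbius function. Then β(W, s) = (−1)^{W−1} if s = 1; β(W, s) = −1 − (−1)^{W−1} if s = 2; and β(W, s) = 0 if s ≥ 3. (In the paper this is applied with W = W_z, the number of 1's in the primitive root of a binary word z ∈ Ω_T, and with s ranging over the divisors of N_z.) -/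
open scoped BigOperators

/-! For `n ≥ 1`, `(-1)^(nW-1)` is `-1` when `n` is even and `(-1)^(W-1)` when `n` is odd, i.e. it
is `∑_{d ∣ n} f d` for the function `f` supported on `{1, 2}` with `f 1 = (-1)^(W-1)` and
`f 2 = -1 - (-1)^(W-1)`. Möbius inversion then returns `f s`. -/

theorem neg_one_pow_sub_one {R : Type*} [Ring R] {k : ℕ} (hk : k ≠ 0) :
    (-1 : R) ^ (k - 1) = -(-1) ^ k := by
  obtain ⟨j, rfl⟩ := Nat.exists_eq_succ_of_ne_zero hk
  simp [pow_succ]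

theorem neg_one_pow_mul_sub_one {R : Type*} [Ring R] {n W : ℕ} (hn : n ≠ 0) (hW : W ≠ 0) :
    (-1 : R) ^ (n * W - 1) = if Even n then -1 else (-1) ^ (W - 1) := by
  rw [neg_one_pow_sub_one (mul_ne_zero hn hW), neg_one_pow_sub_one hW, pow_mul]
  split_ifs with h
  · rw [h.neg_one_pow, one_pow]
  · rw [(Nat.not_even_iff_odd.1 h).neg_one_pow]

theorem Nat.sum_divisors_ite_one_ite_two {R : Type*} [AddCommMonoid R] (a c : R) {n : ℕ}
    (hn : n ≠ 0) :
    ∑ d ∈ n.divisors, (if d = 1 then a else if d = 2 then c else 0) =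
      a + if Even n then c else 0 := by
  calc ∑ d ∈ n.divisors, (if d = 1 then a else if d = 2 then c else 0)
      = ∑ d ∈ n.divisors, ((if d = 1 then a else 0) + if d = 2 then c else 0) :=
        Finset.sum_congr rfl fun d _ => by split_ifs <;> simp_all
    _ = a + if Even n then c else 0 := by
        rw [Finset.sum_add_distrib, Finset.sum_ite_eq', Finset.sum_ite_eq',
          if_pos (Nat.one_mem_divisors.2 hn)]
        simp [hn, even_iff_two_dvd]

open ArithmeticFunction ArithmeticFunction.Moebius in
theorem sum_divisors_moebius_mul_parity {R : Type*} [CommRing R] (a b : R) (s : ℕ) :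
    ∑ r ∈ s.divisors, (μ r : R) * (if Even (s / r) then b else a) =
      if s = 1 then a else if s = 2 then b - a else 0 := by
  rcases eq_or_ne s 0 with rfl | hs
  · simp
  have inversion := (sum_eq_iff_sum_mul_moebius_eq
    (f := fun d => if d = 1 then a else if d = 2 then b - a else 0)
    (g := fun n => if Even n then b else a)).1
    (fun n hn => by
      rw [Nat.sum_divisors_ite_one_ite_two _ _ hn.ne']
      split_ifs <;> abel) s (Nat.pos_of_ne_zero hs)
  rwa [Nat.sum_divisorsAntidiagonal (f := fun x y => (μ x : R) * if Even y then b else a)]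
    at inversion

open ArithmeticFunction ArithmeticFunction.Moebius in
theorem moebius_beta_sum_general (W s : ℕ) (hW : 1 ≤ W) :
    (∑ r ∈ s.divisors, (μ r : ℤ) * (-1 : ℤ) ^ (s / r * W - 1)) =
      if s = 1 then (-1 : ℤ) ^ (W - 1)
      else if s = 2 then -1 - (-1 : ℤ) ^ (W - 1)
      else 0 := by
  rw [← sum_divisors_moebius_mul_parity]
  refine Finset.sum_congr rfl fun r hr => ?_
  have hsr : s / r ≠ 0 := (Nat.div_pos (Nat.divisor_le hr) (Nat.pos_of_mem_divisors hr)).ne'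
  rw [Int.cast_id, neg_one_pow_mul_sub_one hsr (by omega)]

open ArithmeticFunction ArithmeticFunction.Moebius in
/-- **Lemma (Möbius sums).** For integers `W ≥ 1`, `s ≥ 1`, with
`β(W,s) = Σ_{r ∣ s} μ(r) (-1)^{(s/r)W - 1}`: `β(W,1) = (-1)^{W-1}`,
`β(W,2) = -1 - (-1)^{W-1}`, and `β(W,s) = 0` for `s ≥ 3`. -/
theorem moebius_beta_sum (W s : ℕ) (hW : 1 ≤ W) (hs : 1 ≤ s) :
    (∑ r ∈ s.divisors, (μ r : ℤ) * (-1 : ℤ) ^ (s / r * W - 1)) =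
      if s = 1 then (-1 : ℤ) ^ (W - 1)
      else if s = 2 then -1 - (-1 : ℤ) ^ (W - 1)
      else 0 :=
  moebius_beta_sum_general W s hW
end

section
/- Let Σ be a nonempty finite alphabet, T ≥ 1, and let F̂ = (F̂^(0), …, F̂^(T−1)) be an ordered list of finite sets of nonempty words over Σ defining the PFT X = X_{F̂,T}. Then there exist an integer ℓ ≥ 1 and a set F⁰ ⊆ Σ^ℓ such that X = X_{F,T} with F = (F⁰, ∅, …, ∅); that is, every PFT admits a representation in standard form in which all forbidden words lie in the 0-th forbidden set and have a common length ℓ. -/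
open scoped BigOperators

/-!
Pad every forbidden word to the common length `ℓ = T + M`, where `M` bounds the lengths of
all forbidden words: a length-`ℓ` window starting at a multiple of `T` is declared forbidden
when, at some offset `o < T`, it contains a word of `F̂^(o)`. Every position `i` is `o` places
after the multiple `i - (i mod T)` of `T`, with `o = i mod T`, so an occurrence of a word of
`F̂^(i mod T)` at `i` is the same as a forbidden window at `i - (i mod T)`.
-/

section StandardForm

variable {A : Type} {T : ℕ} {Fh : ℕ → Set (List A)}

lemma Int.toNat_add_emod_of_dvd {t : ℤ} {o : ℕ} (ht : (T : ℤ) ∣ t) (ho : o < T) :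
    ((t + o) % (T : ℤ)).toNat = o := by
  obtain ⟨c, rfl⟩ := ht
  rw [add_comm, Int.add_mul_emod_self_left, Int.emod_eq_of_lt (by omega) (by omega)]
  simp

def windowForbidden (T : ℕ) (Fh : ℕ → Set (List A)) (ℓ : ℕ) : Set (Word A ℓ) :=
  {w | ∃ o < T, ∃ f ∈ Fh o, ∃ _ : o + f.length ≤ ℓ,
    ∀ k (hk : k < f.length), f.get ⟨k, hk⟩ = w ⟨o + k, by omega⟩}

lemma pftGen_subset_pftSF_windowForbidden (ℓ : ℕ) :
    pftGen T Fh ⊆ pftSF (windowForbidden T Fh ℓ) T := by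
  rintro x ⟨r, hr, hx⟩
  refine ⟨r, hr, fun i hi ⟨o, ho, f, hf, _, hmatch⟩ => hx (i + o) f ?_ fun k hk => ?_⟩
  · rwa [Int.toNat_add_emod_of_dvd hi ho]
  · rw [hmatch k hk]
    exact congrArg x (by push_cast; ring)

lemma pftSF_windowForbidden_subset_pftGen (hT : 0 < T) {ℓ : ℕ}
    (hℓ : ∀ j < T, ∀ f ∈ Fh j, j + f.length ≤ ℓ) :
    pftSF (windowForbidden T Fh ℓ) T ⊆ pftGen T Fh := by
  rintro x ⟨r, hr, hx⟩
  refine ⟨r, hr, fun i f hf hmatch => ?_⟩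
  set j : ℕ := (i % (T : ℤ)).toNat
  have hj : (j : ℤ) = i % T := Int.toNat_of_nonneg (Int.emod_nonneg i (by omega))
  have hjT : j < T := by have := Int.emod_lt_of_pos i (by omega : (0 : ℤ) < T); omega
  refine hx (i - j) (hj ▸ Int.dvd_self_sub_emod) ⟨j, hjT, f, hf, hℓ j hjT f hf, fun k hk => ?_⟩
  rw [hmatch k hk]
  exact congrArg x (by push_cast; ring)

lemma exists_length_bound (hfin : ∀ j, (Fh j).Finite) :
    ∃ M, ∀ j < T, ∀ f ∈ Fh j, f.length ≤ M := by
  obtain ⟨M, hM⟩ := ((Set.finite_lt_nat T).biUnion fun j _ => (hfin j).image List.length).bddAbove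
  exact ⟨M, fun j hj f hf => hM (Set.mem_biUnion hj (Set.mem_image_of_mem _ hf))⟩

end StandardForm

theorem pft_standard_form_general {A : Type} (T : ℕ) (hT : 1 ≤ T)
    (Fh : ℕ → Set (List A)) (hfin : ∀ j, (Fh j).Finite) :
    ∃ ℓ : ℕ, 1 ≤ ℓ ∧ ∃ F0 : Set (Word A ℓ), pftGen T Fh = pftSF F0 T := by
  obtain ⟨M, hM⟩ := exists_length_bound hfin
  have hℓ : ∀ j < T, ∀ f ∈ Fh j, j + f.length ≤ T + M := fun j hj f hf => by
    have := hM j hj f hf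
    omega
  exact ⟨T + M, by omega, windowForbidden T Fh (T + M),
    (pftGen_subset_pftSF_windowForbidden _).antisymm (pftSF_windowForbidden_subset_pftGen hT hℓ)⟩

/-- **Proposition (standard form).** Every PFT `X_{F̂,T}`, defined by an ordered list
`F̂ = (F̂^(0), …, F̂^(T-1))` of finite sets of nonempty forbidden words, admits a
representation in standard form: there are `ℓ ≥ 1` and `F⁰ ⊆ Σ^ℓ` with
`X_{F̂,T} = X(F⁰, ℓ, T)`. -/
theorem pft_standard_form {A : Type} [Fintype A] [Nonempty A] (T : ℕ) (hT : 1 ≤ T)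
    (Fh : ℕ → Set (List A)) (hfin : ∀ j, (Fh j).Finite)
    (hne : ∀ j, ∀ f ∈ Fh j, f ≠ []) :
    ∃ ℓ : ℕ, 1 ≤ ℓ ∧ ∃ F0 : Set (Word A ℓ), pftGen T Fh = pftSF F0 T :=
  pft_standard_form_general T hT Fh hfin
end
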